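/- arXiv:1812.06886 — 4 statements merged into one kernel-verified Lean document; each statement's English description precedes it below -/
import Mathlib

section
/- Let G be a finite group of order n and let m ≥ 1. A (G, m+1; 1)-difference matrix exists if and only if there exist permutations θ₁, θ₂, …, θ_m of G with θ₁ the identity such that for all distinct i, i' ∈ {1,…,m}, the minimum over g ∈ G of the Hamming distance between the map h ↦ θ_{i'}(h·g) and the map h ↦ θ_i(h) equals n − 1 (i.e., d(R(G)θ_{i'}, θ_i) = n − 1, where R(G)θ_{i'} = { h ↦ θ_{i'}(h·g) : g ∈ G }). -/
/-- A `(G, m+1; 1)`-difference matrix: an `(m+1) × n` matrix with entries in `G`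
such that for distinct rows `i ≠ j` the differences `(D i k)⁻¹ * (D j k)` are
pairwise distinct. -/
def IsDiffMatrix {G : Type*} [Group G] {m n : ℕ} (D : Fin (m + 1) → Fin n → G) : Prop :=
  ∀ i j : Fin (m + 1), i ≠ j → Function.Injective fun k : Fin n => (D i k)⁻¹ * D j k

/-- Hamming distance between two self-maps of a finite type. -/
def fnHammingDist {G : Type*} [Fintype G] [DecidableEq G] (σ τ : G → G) : ℕ :=
  (Finset.univ.filter fun h => σ h ≠ τ h).card

section Aux

variable {G : Type*} [Group G] [Fintype G] [DecidableEq G]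

lemma hamming_key {n : ℕ} (hn : Fintype.card G = n) (σ τ : Equiv.Perm G) (g : G) :
    fnHammingDist (fun h => τ (h * g)) ⇑σ
      + (Finset.univ.filter fun h : G => h⁻¹ * τ.symm (σ h) = g).card = n := by
  have h1 : (Finset.univ.filter fun h : G => h⁻¹ * τ.symm (σ h) = g)
      = (Finset.univ.filter fun h : G => ¬ ((fun h => τ (h * g)) h ≠ σ h)) := by
    ext h
    simp only [Finset.mem_filter, Finset.mem_univ, true_and, not_not]
    rw [inv_mul_eq_iff_eq_mul, eq_comm, ← Equiv.apply_eq_iff_eq_symm_apply]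
  rw [fnHammingDist, h1, Finset.card_filter_add_card_filter_not, Finset.card_univ, hn]

lemma hamming_equiv {n : ℕ} (hn : Fintype.card G = n) (σ τ : Equiv.Perm G) :
    ((∀ g : G, n - 1 ≤ fnHammingDist (fun h => τ (h * g)) ⇑σ) ∧
      (∃ g : G, fnHammingDist (fun h => τ (h * g)) ⇑σ = n - 1)) ↔
    Function.Injective fun h : G => h⁻¹ * τ.symm (σ h) := by
  have hn1 : 1 ≤ n := hn ▸ Fintype.card_pos
  constructor
  · rintro ⟨hall, -⟩
    intro a b hab
    simp only at hab
    by_contra hne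
    set g := a⁻¹ * τ.symm (σ a) with hg
    have ha : a ∈ Finset.univ.filter fun h : G => h⁻¹ * τ.symm (σ h) = g :=
      Finset.mem_filter.mpr ⟨Finset.mem_univ _, rfl⟩
    have hb : b ∈ Finset.univ.filter fun h : G => h⁻¹ * τ.symm (σ h) = g :=
      Finset.mem_filter.mpr ⟨Finset.mem_univ _, hab.symm⟩
    have h2 : 1 < (Finset.univ.filter fun h : G => h⁻¹ * τ.symm (σ h) = g).card :=
      Finset.one_lt_card.mpr ⟨a, ha, b, hb, hne⟩
    have hk := hamming_key hn σ τ g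
    have := hall g
    omega
  · intro hinj
    have hbij : Function.Bijective fun h : G => h⁻¹ * τ.symm (σ h) :=
      Finite.injective_iff_bijective.mp hinj
    have hd : ∀ g : G, fnHammingDist (fun h => τ (h * g)) ⇑σ = n - 1 := by
      intro g
      obtain ⟨h0, hh0⟩ := hbij.2 g
      have hcard : (Finset.univ.filter fun h : G => h⁻¹ * τ.symm (σ h) = g).card = 1 := by
        rw [Finset.card_eq_one]
        refine ⟨h0, ?_⟩
        ext x
        simp only [Finset.mem_filter, Finset.mem_univ, true_and, Finset.mem_singleton]
        constructor
        · intro hx; exact hinj (hx.trans hh0.symm)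
        · rintro rfl; exact hh0
      have hk := hamming_key hn σ τ g
      rw [hcard] at hk
      omega
    exact ⟨fun g => (hd g).ge, ⟨1, hd 1⟩⟩

end Aux

/-- A `(G, m+1; 1)`-difference matrix exists iff there are permutations
`θ₁ = Id, θ₂, …, θ_m` of `G` such that for all distinct `i, i'` the minimum over
`g ∈ G` of the Hamming distance between `h ↦ θ_{i'}(h·g)` and `θ_i` equals `n - 1`
(expressed as: all such distances are `≥ n - 1` and some equals `n - 1`). -/
theorem diffMatrix_iff_cosets {G : Type*} [Group G] [Fintype G] [DecidableEq G]
    {n m : ℕ} (hn : Fintype.card G = n) (hm : 1 ≤ m) :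
    (∃ D : Fin (m + 1) → Fin n → G, IsDiffMatrix D) ↔
    (∃ θ : Fin m → Equiv.Perm G, θ ⟨0, hm⟩ = Equiv.refl G ∧
      ∀ i i' : Fin m, i ≠ i' →
        (∀ g : G, n - 1 ≤ fnHammingDist (fun h => θ i' (h * g)) (⇑(θ i))) ∧
        (∃ g : G, fnHammingDist (fun h => θ i' (h * g)) (⇑(θ i)) = n - 1)) := by
  constructor
  · rintro ⟨D, hD⟩
    set r : Fin m → Fin n → G := fun i k => (D 0 k)⁻¹ * D i.succ k with hr
    have hrinj : ∀ i, Function.Injective (r i) := fun i => hD 0 i.succ (Fin.succ_ne_zero i).symm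
    have hrbij : ∀ i, Function.Bijective (r i) := fun i =>
      (Fintype.bijective_iff_injective_and_card (r i)).mpr ⟨hrinj i, by simp [hn]⟩
    set ri : Fin m → (Fin n ≃ G) := fun i => Equiv.ofBijective (r i) (hrbij i) with hri
    refine ⟨fun i => (ri i).symm.trans (ri ⟨0, hm⟩), Equiv.symm_trans_self _, ?_⟩
    intro i i' hii'
    apply (hamming_equiv hn ((ri i).symm.trans (ri ⟨0, hm⟩))
      ((ri i').symm.trans (ri ⟨0, hm⟩))).mpr
    have hcomp : (fun h : G => h⁻¹ * ((ri i').symm.trans (ri ⟨0, hm⟩)).symm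
        (((ri i).symm.trans (ri ⟨0, hm⟩)) h)) ∘ ⇑(ri i)
        = fun k => (D i.succ k)⁻¹ * D i'.succ k := by
      funext k
      simp [hri, hr, mul_inv_rev, mul_assoc]
    rw [← Equiv.injective_comp (ri i), hcomp]
    exact hD i.succ i'.succ (fun h => hii' (Fin.succ_inj.mp h))
  · rintro ⟨θ, hθ0, hθ⟩
    let e : Fin n ≃ G := (Fintype.equivFinOfCardEq hn).symm
    refine ⟨fun j => Fin.cases (fun _ => (1 : G)) (fun i k => (θ i).symm (e k)) j, ?_⟩
    intro i j hij
    induction i using Fin.cases with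
    | zero =>
      induction j using Fin.cases with
      | zero => exact absurd rfl hij
      | succ j' =>
        simp only [Fin.cases_zero, Fin.cases_succ, inv_one, one_mul]
        exact (θ j').symm.injective.comp e.injective
    | succ i' =>
      induction j using Fin.cases with
      | zero =>
        simp only [Fin.cases_zero, Fin.cases_succ, mul_one]
        exact inv_injective.comp ((θ i').symm.injective.comp e.injective)
      | succ j' =>
        have hne : i' ≠ j' := fun h => hij (congrArg Fin.succ h)
        have hinj := (hamming_equiv hn (θ i') (θ j')).mp (hθ i' j' hne)
        simp only [Fin.cases_succ]
        have hcomp : (fun h : G => h⁻¹ * (θ j').symm (θ i' h)) ∘ ⇑(e.trans (θ i').symm)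
            = fun k : Fin n => ((θ i').symm (e k))⁻¹ * (θ j').symm (e k) := by
          funext k; simp
        rw [← hcomp]
        exact hinj.comp (e.trans (θ i').symm).injective
end

section
/- Let G be a finite group of order n and let m ≥ 1. If a (G, m+1; 1)-difference matrix exists, then there exist permutations θ₁, θ₂, …, θ_m of G with θ₁ the identity such that for all distinct i, i' ∈ {1,…,m} and all g ∈ G, the Hamming distance between the map h ↦ θ_{i'}(h·g) and the map h ↦ θ_i(h) is at least n − 1, and this distance equals n − 1 for some g ∈ G. -/
/-- If a `(G, m+1; 1)`-difference matrix exists, then there are permutations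
`θ₁ = Id, θ₂, …, θ_m` of `G` such that for all distinct `i, i'` and all `g ∈ G`
the Hamming distance between `h ↦ θ_{i'}(h·g)` and `θ_i` is at least `n - 1`,
with equality for some `g ∈ G`. -/
theorem diffMatrix_to_cosets {G : Type*} [Group G] [Fintype G] [DecidableEq G]
    {n m : ℕ} (hn : Fintype.card G = n) (hm : 1 ≤ m)
    (D : Fin (m + 1) → Fin n → G) (hD : IsDiffMatrix D) :
    ∃ θ : Fin m → Equiv.Perm G, θ ⟨0, hm⟩ = Equiv.refl G ∧
      ∀ i i' : Fin m, i ≠ i' →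
        (∀ g : G, n - 1 ≤ fnHammingDist (fun h => θ i' (h * g)) (⇑(θ i))) ∧
        (∃ g : G, fnHammingDist (fun h => θ i' (h * g)) (⇑(θ i)) = n - 1) := by
  have hc : Fintype.card (Fin n) = Fintype.card G := by simp [hn]
  have hnpos : 0 < n := hn ▸ Fintype.card_pos
  have hbij : ∀ i : Fin m, Function.Bijective (fun k : Fin n => (D 0 k)⁻¹ * D i.succ k) :=
    fun i => (Fintype.bijective_iff_injective_and_card _).mpr
      ⟨hD 0 i.succ (Fin.succ_ne_zero i).symm, hc⟩
  set e : Fin m → (Fin n ≃ G) := fun i => Equiv.ofBijective _ (hbij i) with he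
  have heval : ∀ (i : Fin m) (k : Fin n), e i k = (D 0 k)⁻¹ * D i.succ k := fun _ _ => rfl
  refine ⟨fun i => (e i).symm.trans (e ⟨0, hm⟩), Equiv.symm_trans_self _, ?_⟩
  intro i i' hii
  have hFinj : Function.Injective (fun k : Fin n => (D i.succ k)⁻¹ * D i'.succ k) :=
    hD i.succ i'.succ (fun h => hii (Fin.succ_injective _ h))
  have halg : ∀ k : Fin n, (e i k)⁻¹ * e i' k = (D i.succ k)⁻¹ * D i'.succ k := by
    intro k; rw [heval, heval]; group
  have key : ∀ g : G, (Finset.univ.filter fun h : G =>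
      ((e i').symm.trans (e ⟨0, hm⟩)) (h * g) = ((e i).symm.trans (e ⟨0, hm⟩)) h).card
      = (Finset.univ.filter fun k : Fin n => (D i.succ k)⁻¹ * D i'.succ k = g).card := by
    intro g
    apply Finset.card_bij' (fun h _ => (e i).symm h) (fun k _ => e i k)
    · intro h hh
      simp only [Finset.mem_filter, Finset.mem_univ, true_and] at hh ⊢
      simp only [Equiv.trans_apply] at hh ⊢
      have h1 : (e i').symm (h * g) = (e i).symm h := (e ⟨0, hm⟩).injective hh
      have h2 : h * g = e i' ((e i).symm h) := by
        rw [← h1, Equiv.apply_symm_apply]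
      have h3 : h = e i ((e i).symm h) := (Equiv.apply_symm_apply _ _).symm
      calc (D i.succ ((e i).symm h))⁻¹ * D i'.succ ((e i).symm h)
          = (e i ((e i).symm h))⁻¹ * e i' ((e i).symm h) := (halg _).symm
        _ = g := by rw [← h2, ← h3]; group
    · intro k hk
      simp only [Finset.mem_filter, Finset.mem_univ, true_and] at hk ⊢
      simp only [Equiv.trans_apply] at hk ⊢
      have h2 : e i k * g = e i' k := by
        rw [← hk, ← halg]; group
      rw [h2]; simp
    · intro h _; simp
    · intro k _; simp
  have hle1 : ∀ g : G, (Finset.univ.filter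
      fun k : Fin n => (D i.succ k)⁻¹ * D i'.succ k = g).card ≤ 1 := by
    intro g
    refine Finset.card_le_one.mpr ?_
    intro a ha b hb
    simp only [Finset.mem_filter] at ha hb
    exact hFinj (ha.2.trans hb.2.symm)
  have hsum : ∀ g : G, (Finset.univ.filter fun h : G =>
      ((e i').symm.trans (e ⟨0, hm⟩)) (h * g) = ((e i).symm.trans (e ⟨0, hm⟩)) h).card
      + fnHammingDist (fun h => ((e i').symm.trans (e ⟨0, hm⟩)) (h * g))
          (((e i).symm.trans (e ⟨0, hm⟩)) : G → G) = n := by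
    intro g
    rw [fnHammingDist]
    rw [Finset.card_filter_add_card_filter_not]
    · simp [hn]
  constructor
  · intro g
    beta_reduce
    have := hsum g
    have := (key g) ▸ hle1 g
    omega
  · -- pick g := F k₀
    obtain ⟨k₀⟩ : Nonempty (Fin n) := ⟨⟨0, hnpos⟩⟩
    refine ⟨(D i.succ k₀)⁻¹ * D i'.succ k₀, ?_⟩
    beta_reduce
    have hmem : k₀ ∈ Finset.univ.filter
        (fun k : Fin n => (D i.succ k)⁻¹ * D i'.succ k = (D i.succ k₀)⁻¹ * D i'.succ k₀) := by
      simp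
    have h1 : 1 ≤ (Finset.univ.filter
        (fun k : Fin n => (D i.succ k)⁻¹ * D i'.succ k
          = (D i.succ k₀)⁻¹ * D i'.succ k₀)).card :=
      Finset.card_pos.mpr ⟨k₀, hmem⟩
    have := hsum ((D i.succ k₀)⁻¹ * D i'.succ k₀)
    have h2 := hle1 ((D i.succ k₀)⁻¹ * D i'.succ k₀)
    have h3 := key ((D i.succ k₀)⁻¹ * D i'.succ k₀)
    omega
end

section
/- If there exists an (n, m)-separable permutation code of length n and minimum distance n−1 whose blocks each have cardinality n (i.e., a subset C of the symmetric group on Fin n that is the disjoint union of m sets L₁,…,L_m of n permutations each, with Hamming distance n between distinct permutations in the same block and Hamming distance n−1 between permutations in different blocks), then there exist m mutually orthogonal Latin squares of order n. -/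
/-- Hamming distance between two permutations of `Fin n`. -/
def permHammingDist {n : ℕ} (σ τ : Equiv.Perm (Fin n)) : ℕ :=
  (Finset.univ.filter fun x => σ x ≠ τ x).card

/-- A Latin square of order `n`: every row map and every column map is a bijection. -/
def IsLatinSquare {n : ℕ} (L : Fin n → Fin n → Fin n) : Prop :=
  (∀ i, Function.Bijective fun j => L i j) ∧ (∀ j, Function.Bijective fun i => L i j)

/-- Two squares are orthogonal if the superposition map is injective. -/
def IsOrthogonal {n : ℕ} (L₁ L₂ : Fin n → Fin n → Fin n) : Prop :=
  Function.Injective fun p : Fin n × Fin n => (L₁ p.1 p.2, L₂ p.1 p.2)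

/-- An `(n, m)`-separable permutation code of length `n` and minimum distance
`n - 1` whose blocks each have `n` permutations yields `m` mutually orthogonal
Latin squares of order `n`. -/
theorem separable_PA_to_MOLS {n m : ℕ}
    (L : Fin m → Finset (Equiv.Perm (Fin n)))
    (hcard : ∀ i, (L i).card = n)
    (hdisj : ∀ i j, i ≠ j → Disjoint (L i) (L j))
    (hwithin : ∀ i, ∀ σ ∈ L i, ∀ τ ∈ L i, σ ≠ τ → permHammingDist σ τ = n)
    (hcross : ∀ i j, i ≠ j → ∀ σ ∈ L i, ∀ τ ∈ L j, permHammingDist σ τ = n - 1) :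
    ∃ M : Fin m → (Fin n → Fin n → Fin n),
      (∀ k, IsLatinSquare (M k)) ∧
      (∀ k k', k ≠ k' → IsOrthogonal (M k) (M k')) := by
  classical
  -- Within a block, two permutations agreeing anywhere are equal.
  have huniq : ∀ i, ∀ σ ∈ L i, ∀ τ ∈ L i, ∀ x : Fin n, σ x = τ x → σ = τ := by
    intro i σ hσ τ hτ x hx
    by_contra h
    have hd := hwithin i σ hσ τ hτ h
    unfold permHammingDist at hd
    have huniv : (Finset.univ.filter fun x => σ x ≠ τ x) = Finset.univ := by
      apply Finset.eq_univ_of_card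
      simpa using hd
    have := (Finset.eq_univ_iff_forall.mp huniv) x
    simp only [Finset.mem_filter, Finset.mem_univ, true_and] at this
    exact this hx
  -- Existence: for each block, point, value, there is a permutation in the block
  -- mapping the point to the value.
  have hex : ∀ (i : Fin m) (x y : Fin n), ∃ σ, σ ∈ L i ∧ σ x = y := by
    intro i x y
    have hinj : Set.InjOn (fun σ : Equiv.Perm (Fin n) => σ x) (L i) := by
      intro σ hσ τ hτ h
      exact huniq i σ hσ τ hτ x h
    have himg : ((L i).image fun σ => σ x) = Finset.univ := by
      apply Finset.eq_univ_of_card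
      rw [Finset.card_image_of_injOn hinj, hcard i]
      simp
    have : y ∈ (L i).image fun σ => σ x := by rw [himg]; exact Finset.mem_univ y
    obtain ⟨σ, hσ, hσx⟩ := Finset.mem_image.mp this
    exact ⟨σ, hσ, hσx⟩
  -- Across blocks, two permutations agree in at most one point.
  have hcross1 : ∀ i j, i ≠ j → ∀ σ ∈ L i, ∀ τ ∈ L j,
      ∀ x x' : Fin n, σ x = τ x → σ x' = τ x' → x = x' := by
    intro i j hij σ hσ τ hτ x x' hx hx'
    have hd := hcross i j hij σ hσ τ hτ
    unfold permHammingDist at hd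
    have hsplit := Finset.card_filter_add_card_filter_not
      (s := (Finset.univ : Finset (Fin n))) (p := fun x => σ x ≠ τ x)
    have hn : 0 < n := Fin.pos_iff_nonempty.mpr ⟨x⟩
    have hagree : (Finset.univ.filter fun x => ¬ σ x ≠ τ x).card = 1 := by
      rw [hd] at hsplit
      simp only [Finset.card_univ, Fintype.card_fin] at hsplit
      omega
    have hle : (Finset.univ.filter fun x => ¬ σ x ≠ τ x).card ≤ 1 := hagree.le
    have hx1 : x ∈ Finset.univ.filter fun x => ¬ σ x ≠ τ x := by
      simp [hx]
    have hx2 : x' ∈ Finset.univ.filter fun x => ¬ σ x ≠ τ x := by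
      simp [hx']
    exact Finset.card_le_one.mp hle x hx1 x' hx2
  choose f hfL hfval using hex
  refine ⟨fun k x y => (L k).equivFinOfCardEq (hcard k) ⟨f k x y, hfL k x y⟩, ?_, ?_⟩
  · intro k
    constructor
    · intro x
      rw [Finite.injective_iff_bijective.symm]
      intro y y' h
      have h1 : f k x y = f k x y' := by
        have := ((L k).equivFinOfCardEq (hcard k)).injective h
        exact Subtype.ext_iff.mp this
      calc y = f k x y x := (hfval k x y).symm
        _ = f k x y' x := by rw [h1]
        _ = y' := hfval k x y'
    · intro y
      rw [Finite.injective_iff_bijective.symm]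
      intro x x' h
      have h1 : f k x y = f k x' y := by
        have := ((L k).equivFinOfCardEq (hcard k)).injective h
        exact Subtype.ext_iff.mp this
      have : f k x y x = f k x y x' := by
        rw [hfval k x y]; rw [h1]; exact (hfval k x' y).symm
      exact (f k x y).injective this
  · intro k k' hkk'
    intro p p' h
    obtain ⟨x, y⟩ := p
    obtain ⟨x', y'⟩ := p'
    simp only [Prod.mk.injEq] at h
    obtain ⟨h1, h2⟩ := h
    have hσ : f k x y = f k x' y' := by
      have := ((L k).equivFinOfCardEq (hcard k)).injective h1
      exact Subtype.ext_iff.mp this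
    have hτ : f k' x y = f k' x' y' := by
      have := ((L k').equivFinOfCardEq (hcard k')).injective h2
      exact Subtype.ext_iff.mp this
    -- σ := f k x y and τ := f k' x y agree at x and at x'.
    have ha1 : f k x y x = f k' x y x := by
      rw [hfval k x y, hfval k' x y]
    have ha2 : f k x y x' = f k' x y x' := by
      rw [hσ, hτ, hfval k x' y', hfval k' x' y']
    have hxx : x = x' :=
      hcross1 k k' hkk' (f k x y) (hfL k x y) (f k' x y) (hfL k' x y) x x' ha1 ha2
    have hyy : y = y' := by
      calc y = f k x y x := (hfval k x y).symm
        _ = f k x' y' x' := by rw [hσ, hxx]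
        _ = y' := hfval k x' y'
    simp [hxx, hyy]
end

section
/- There exist subgroups H and K of the symmetric group on Fin 21, with H cyclic of order 21 generated by a 21-cycle and K cyclic of order 5, such that the double coset product set H·K = { h * k : h ∈ H, k ∈ K } has cardinality 105 and is a (21,5)-separable permutation code of length 21 and minimum distance 20; that is, H·K is the disjoint union of 5 sets of 21 permutations each, with Hamming distance 21 between distinct permutations in the same block and Hamming distance 20 between permutations in different blocks. -/
namespace DC215

open scoped Fin.NatCast Fin.CommRing

def gfun : Fin 21 → Fin 21 :=
  ![0, 2, 13, 18, 7, 14, 5, 20, 10, 15, 1, 19, 17, 8, 12, 11, 9, 6, 4, 16, 3]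

def gifun : Fin 21 → Fin 21 :=
  ![0, 10, 1, 20, 18, 6, 17, 4, 13, 16, 8, 15, 14, 2, 5, 9, 19, 12, 3, 11, 7]

def g : Equiv.Perm (Fin 21) := ⟨gfun, gifun, by decide, by decide⟩

lemma g5 : g ^ 5 = 1 := by apply Equiv.ext; decide

lemma gne : g ≠ 1 := by
  intro hc
  exact absurd (Equiv.ext_iff.mp hc 1) (by decide)

lemma gorder : orderOf g = 5 := by
  haveI : Fact (Nat.Prime 5) := ⟨by norm_num⟩
  exact orderOf_eq_prime g5 gne

lemma key3 : ∀ i j : Fin 5, i ≠ j → ∀ c : Fin 21,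
    (Finset.univ.filter fun x => (g ^ (i : ℕ)) x - (g ^ (j : ℕ)) x = c).card = 1 := by
  decide

noncomputable def h : Equiv.Perm (Fin 21) := finRotate 21

lemma hpow (k : ℕ) (x : Fin 21) : (h ^ k) x = x + (k : Fin 21) := by
  induction k with
  | zero => simp
  | succ n ih =>
      rw [pow_succ', Equiv.Perm.mul_apply, ih,
        show (h : Equiv.Perm (Fin 21)) = finRotate 21 from rfl, finRotate_succ_apply]
      push_cast
      ring

lemma hcycle : h.IsCycle := isCycle_finRotate_of_le (by norm_num)

lemma hsupport : h.support = Finset.univ := support_finRotate_of_le (by norm_num)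

lemma horder : orderOf h = 21 := by
  rw [hcycle.orderOf, hsupport, Finset.card_univ, Fintype.card_fin]

lemma hpow_inj {a b : Fin 21} (hab : h ^ (a : ℕ) = h ^ (b : ℕ)) : a = b := by
  have := pow_eq_pow_iff_modEq.mp hab
  rw [horder] at this
  have h1 : (a : ℕ) % 21 = (b : ℕ) % 21 := this
  rw [Nat.mod_eq_of_lt a.isLt, Nat.mod_eq_of_lt b.isLt] at h1
  exact Fin.ext h1

/-- The blocks. -/
noncomputable def L (i : Fin 5) : Finset (Equiv.Perm (Fin 21)) :=
  Finset.univ.image fun a : Fin 21 => h ^ (a : ℕ) * g ^ (i : ℕ)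

lemma mem_L {i : Fin 5} {σ : Equiv.Perm (Fin 21)} :
    σ ∈ L i ↔ ∃ a : Fin 21, σ = h ^ (a : ℕ) * g ^ (i : ℕ) := by
  simp [L, eq_comm]

lemma eval (a : Fin 21) (i : Fin 5) (x : Fin 21) :
    (h ^ (a : ℕ) * g ^ (i : ℕ)) x = (g ^ (i : ℕ)) x + a := by
  rw [Equiv.Perm.mul_apply, hpow]
  simp [Fin.cast_val_eq_self]

lemma iff_aux (u v a b : Fin 21) : u + a = v + b ↔ u - v = b - a := by
  constructor <;> intro hh <;> linear_combination hh

lemma agree_card {a b : Fin 21} {i j : Fin 5} (hij : i ≠ j) :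
    (Finset.univ.filter fun x =>
      (h ^ (a : ℕ) * g ^ (i : ℕ)) x = (h ^ (b : ℕ) * g ^ (j : ℕ)) x).card = 1 := by
  have : ∀ x : Fin 21, ((h ^ (a : ℕ) * g ^ (i : ℕ)) x = (h ^ (b : ℕ) * g ^ (j : ℕ)) x)
      ↔ ((g ^ (i : ℕ)) x - (g ^ (j : ℕ)) x = b - a) := by
    intro x
    rw [eval, eval, iff_aux]
  rw [Finset.filter_congr (fun x _ => this x)]
  exact key3 i j hij (b - a)

lemma L_card (i : Fin 5) : (L i).card = 21 := by
  rw [L, Finset.card_image_of_injective _ ?_, Finset.card_univ, Fintype.card_fin]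
  intro a b hab
  exact hpow_inj (mul_right_cancel hab)

lemma L_disj {i j : Fin 5} (hij : i ≠ j) : Disjoint (L i) (L j) := by
  rw [Finset.disjoint_left]
  intro σ hi hj
  obtain ⟨a, rfl⟩ := mem_L.mp hi
  obtain ⟨b, hb⟩ := mem_L.mp hj
  have hcard := agree_card (a := a) (b := b) hij
  rw [← hb] at hcard
  simp at hcard

lemma dist_same {a b : Fin 21} (i : Fin 5) (hab : a ≠ b) :
    permHammingDist (h ^ (a : ℕ) * g ^ (i : ℕ)) (h ^ (b : ℕ) * g ^ (i : ℕ)) = 21 := by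
  unfold permHammingDist
  rw [Finset.filter_true_of_mem, Finset.card_univ, Fintype.card_fin]
  intro x _
  rw [eval, eval]
  intro hc
  exact hab (by linear_combination hc)

lemma dist_cross {a b : Fin 21} {i j : Fin 5} (hij : i ≠ j) :
    permHammingDist (h ^ (a : ℕ) * g ^ (i : ℕ)) (h ^ (b : ℕ) * g ^ (j : ℕ)) = 20 := by
  have hsum := Finset.card_filter_add_card_filter_not
    (s := (Finset.univ : Finset (Fin 21)))
    (p := fun x => (h ^ (a : ℕ) * g ^ (i : ℕ)) x = (h ^ (b : ℕ) * g ^ (j : ℕ)) x)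
  rw [agree_card hij, Finset.card_univ, Fintype.card_fin] at hsum
  unfold permHammingDist
  rw [Finset.filter_congr (q := fun x =>
    ¬ ((h ^ (a : ℕ) * g ^ (i : ℕ)) x = (h ^ (b : ℕ) * g ^ (j : ℕ)) x)) (fun x _ => Iff.rfl)]
  omega

lemma union_eq :
    (↑(Finset.univ.biUnion L) : Set (Equiv.Perm (Fin 21))) =
      {σ | ∃ a ∈ Subgroup.zpowers h, ∃ b ∈ Subgroup.zpowers g, σ = a * b} := by
  ext σ
  simp only [Finset.coe_biUnion, Finset.mem_coe, Finset.mem_biUnion, Finset.mem_univ, true_and,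
    Set.mem_iUnion, Set.mem_setOf_eq, Subgroup.mem_zpowers_iff]
  constructor
  · rintro ⟨i, -, hi⟩
    obtain ⟨a, rfl⟩ := mem_L.mp hi
    exact ⟨h ^ (a : ℕ), ⟨(a : ℕ), zpow_natCast h _⟩, g ^ (i : ℕ), ⟨(i : ℕ), zpow_natCast g _⟩, rfl⟩
  · rintro ⟨x, ⟨z, rfl⟩, y, ⟨w, rfl⟩, rfl⟩
    have h21 : (0:ℤ) < 21 := by norm_num
    have h5 : (0:ℤ) < 5 := by norm_num
    have hz1 : 0 ≤ z % 21 := Int.emod_nonneg z (by norm_num)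
    have hz2 : z % 21 < 21 := Int.emod_lt_of_pos z h21
    have hw1 : 0 ≤ w % 5 := Int.emod_nonneg w (by norm_num)
    have hw2 : w % 5 < 5 := Int.emod_lt_of_pos w h5
    have t1 : (z % 21).toNat < 21 := by zify [hz1]; omega
    have t2 : (w % 5).toNat < 5 := by zify [hw1]; omega
    refine ⟨⟨(w % 5).toNat, t2⟩, trivial, mem_L.mpr ⟨⟨(z % 21).toNat, t1⟩, ?_⟩⟩
    have m1 := zpow_mod_orderOf h z
    rw [horder] at m1
    have e1 : h ^ z = h ^ ((z % 21).toNat) := by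
      rw [← m1, ← zpow_natCast, Int.toNat_of_nonneg hz1]
      norm_num
    have m2 := zpow_mod_orderOf g w
    rw [gorder] at m2
    have e2 : g ^ w = g ^ ((w % 5).toNat) := by
      rw [← m2, ← zpow_natCast, Int.toNat_of_nonneg hw1]
      norm_num
    rw [e1, e2]

end DC215

/-- There are subgroups `H = ⟨h⟩` (cyclic of order `21`, generated by a `21`-cycle)
and `K` (cyclic of order `5`) of the symmetric group on `Fin 21` such that the
product set `H·K` has cardinality `105` and is a `(21,5)`-separable permutation
code of length `21` and minimum distance `20`. -/
theorem double_coset_21_5_separable :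
    ∃ (h : Equiv.Perm (Fin 21)) (K : Subgroup (Equiv.Perm (Fin 21))),
      h.IsCycle ∧ h.support = Finset.univ ∧ orderOf h = 21 ∧
      Nat.card K = 5 ∧ IsCyclic K ∧
      ∃ L : Fin 5 → Finset (Equiv.Perm (Fin 21)),
        (∀ i, (L i).card = 21) ∧
        (∀ i j, i ≠ j → Disjoint (L i) (L j)) ∧
        (Finset.univ.biUnion L).card = 105 ∧
        (↑(Finset.univ.biUnion L) : Set (Equiv.Perm (Fin 21))) =
          {σ | ∃ a ∈ Subgroup.zpowers h, ∃ b ∈ K, σ = a * b} ∧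
        (∀ i, ∀ σ ∈ L i, ∀ τ ∈ L i, σ ≠ τ → permHammingDist σ τ = 21) ∧
        (∀ i j, i ≠ j → ∀ σ ∈ L i, ∀ τ ∈ L j, permHammingDist σ τ = 20) := by

  classical
  haveI : Fact (Nat.Prime 5) := ⟨by norm_num⟩
  refine ⟨DC215.h, Subgroup.zpowers DC215.g, DC215.hcycle, DC215.hsupport, DC215.horder,
    ?_, ?_, DC215.L, DC215.L_card, fun i j hij => DC215.L_disj hij, ?_, DC215.union_eq, ?_, ?_⟩
  · rw [Nat.card_zpowers, DC215.gorder]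
  · exact isCyclic_of_prime_card (p := 5) (by rw [Nat.card_zpowers, DC215.gorder])
  · rw [Finset.card_biUnion (fun i _ j _ hij => DC215.L_disj hij)]
    simp [DC215.L_card]
  · intro i σ hσ τ hτ hne
    obtain ⟨a, rfl⟩ := DC215.mem_L.mp hσ
    obtain ⟨b, rfl⟩ := DC215.mem_L.mp hτ
    have hab : a ≠ b := fun hc => hne (by rw [hc])
    exact DC215.dist_same i hab
  · intro i j hij σ hσ τ hτ
    obtain ⟨a, rfl⟩ := DC215.mem_L.mp hσ
    obtain ⟨b, rfl⟩ := DC215.mem_L.mp hτ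
    exact DC215.dist_cross hij
end
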